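/- Let λ1 ≥ λ2 ≥ λ3 > 0 with λ1 + λ2 + λ3 = 1 and 2λ1 − λ2 > 1, and suppose Λ is a non-entangling (NE) map with Λ(ρ_λ) = σ_λ, where ρ_λ = λ1 Φ1 + λ2 |01⟩⟨01| + λ3 Φ2 and σ_λ = λ1 Φ1 + λ2 Φ2 + λ3 Φ3. Then necessarily tr(Φ1 Λ(Φ1)) = 1, tr(Φ1 Λ(|01⟩⟨01|)) = 0, tr(Φ1 Λ(Φ2)) = 0, tr(Φ2 Λ(|01⟩⟨01|)) = tr(Φ3 Λ(|01⟩⟨01|)) = 1/2, and tr(Φ2 Λ(Φ2)) = λ2/(2λ3). -/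

import Mathlib

open Matrix Kronecker Polynomial
open scoped ComplexOrder

noncomputable section

/-- Index set for two qubits: ℂ²⊗ℂ² ≅ ℂ⁴ with basis |00⟩,|01⟩,|10⟩,|11⟩. -/
abbrev Q2 : Type := Fin 2 × Fin 2
abbrev Mat2 : Type := Matrix (Fin 2) (Fin 2) ℂ
abbrev Mat4 : Type := Matrix Q2 Q2 ℂ
abbrev Vec4 : Type := Q2 → ℂ

/-- Computational basis vector |ij⟩. -/
def ket (i j : Fin 2) : Vec4 := fun p => if p = (i, j) then 1 else 0

/-- The rank-one matrix |ψ⟩⟨φ|. -/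
def ketBra (ψ φ : Vec4) : Mat4 := fun p q => ψ p * star (φ q)

/-- The four Bell vectors |Φ1⟩,…,|Φ4⟩. -/
def bell : Fin 4 → Vec4 :=
  ![(Real.sqrt 2 : ℂ)⁻¹ • (ket 0 0 + ket 1 1),
    (Real.sqrt 2 : ℂ)⁻¹ • (ket 0 0 - ket 1 1),
    (Real.sqrt 2 : ℂ)⁻¹ • (ket 1 0 + ket 0 1),
    (Real.sqrt 2 : ℂ)⁻¹ • (ket 1 0 - ket 0 1)]

/-- Bell projectors Φ_i = |Φ_i⟩⟨Φ_i|. -/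
def bellProj (i : Fin 4) : Mat4 := ketBra (bell i) (bell i)

/-- A two-qubit density matrix: Hermitian positive semidefinite with trace one. -/
def IsDensity (ρ : Mat4) : Prop := ρ.PosSemidef ∧ ρ.trace = 1

/-- Unit vector in ℂ². -/
def IsUnitVec (u : Fin 2 → ℂ) : Prop := ∑ x, Complex.normSq (u x) = 1

/-- Separable two-qubit density matrix: convex mixture of products of pure states. -/
def SepState (ρ : Mat4) : Prop :=
  ∃ (n : ℕ) (p : Fin n → ℝ) (u v : Fin n → Fin 2 → ℂ),
    (∀ i, 0 ≤ p i) ∧ (∑ i, p i = 1) ∧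
    (∀ i, IsUnitVec (u i)) ∧ (∀ i, IsUnitVec (v i)) ∧
    ρ = ∑ i, (p i : ℂ) • (vecMulVec (u i) (star (u i)) ⊗ₖ vecMulVec (v i) (star (v i)))

/-- A SEP map: Kraus operators in product form, trace preserving. -/
def IsSEP (T : Mat4 → Mat4) : Prop :=
  ∃ (k : ℕ) (A B : Fin k → Mat2),
    (∑ i, (A i ⊗ₖ B i)ᴴ * (A i ⊗ₖ B i) = 1) ∧
    ∀ X, T X = ∑ i, (A i ⊗ₖ B i) * X * (A i ⊗ₖ B i)ᴴ

/-- CPTP map in Kraus form. -/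
def IsCPTP (T : Mat4 → Mat4) : Prop :=
  ∃ (k : ℕ) (K : Fin k → Mat4),
    (∑ i, (K i)ᴴ * K i = 1) ∧ ∀ X, T X = ∑ i, K i * X * (K i)ᴴ

/-- Non-entangling (NE) map: CPTP and maps separable states to separable states. -/
def IsNE (T : Mat4 → Mat4) : Prop :=
  IsCPTP T ∧ ∀ ρ, SepState ρ → SepState (T ρ)

/-- The MEMS state ρ_λ = λ1 Φ1 + λ2 |01⟩⟨01| + λ3 Φ2 + λ4 |10⟩⟨10|. -/
def mems (l1 l2 l3 l4 : ℝ) : Mat4 :=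
  (l1 : ℂ) • bellProj 0 + (l2 : ℂ) • ketBra (ket 0 1) (ket 0 1) +
  (l3 : ℂ) • bellProj 1 + (l4 : ℂ) • ketBra (ket 1 0) (ket 1 0)

/-- The Bell-diagonal state σ_λ = λ1 Φ1 + λ2 Φ2 + λ3 Φ3 + λ4 Φ4. -/
def bdiag (l1 l2 l3 l4 : ℝ) : Mat4 :=
  (l1 : ℂ) • bellProj 0 + (l2 : ℂ) • bellProj 1 + (l3 : ℂ) • bellProj 2 + (l4 : ℂ) • bellProj 3

/-- The normalized vector |Φ1(ε)⟩ = (|Φ1⟩ + ε|10⟩)/√(1+ε²). -/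
def phi1eps (ε : ℝ) : Vec4 :=
  (Real.sqrt (1 + ε ^ 2) : ℂ)⁻¹ • (bell 0 + (ε : ℂ) • ket 1 0)


lemma trace_ketBra_mul (w z : Vec4) (M : Mat4) :
    (ketBra w z * M).trace = star z ⬝ᵥ (M *ᵥ w) := by
  simp only [Matrix.trace, Matrix.diag, Matrix.mul_apply, ketBra, dotProduct,
    Matrix.mulVec, Pi.star_apply]
  rw [Finset.sum_comm]
  apply Finset.sum_congr rfl
  intro q _
  rw [Finset.mul_sum]
  apply Finset.sum_congr rfl
  intro p _
  ring

lemma ketBra_mulVec (v z : Vec4) (y : Vec4) :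
    ketBra v z *ᵥ y = (star z ⬝ᵥ y) • v := by
  funext p
  simp only [Matrix.mulVec, ketBra, dotProduct, Pi.smul_apply, smul_eq_mul,
    Pi.star_apply, Finset.sum_mul]
  apply Finset.sum_congr rfl
  intro q _
  ring

lemma star_dot_comm (a b : Vec4) : star a ⬝ᵥ b = star (star b ⬝ᵥ a) := by
  simp [dotProduct, star_sum, mul_comm]

def ubell : Fin 4 → Vec4 :=
  ![ket 0 0 + ket 1 1, ket 0 0 - ket 1 1, ket 1 0 + ket 0 1, ket 1 0 - ket 0 1]

lemma star_sqrt2_inv : star ((Real.sqrt 2 : ℂ))⁻¹ = ((Real.sqrt 2 : ℂ))⁻¹ := by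
  rw [star_inv₀, Complex.star_def, Complex.conj_ofReal]

lemma sqrt2_inv_sq : ((Real.sqrt 2 : ℂ))⁻¹ * ((Real.sqrt 2 : ℂ))⁻¹ = 2⁻¹ := by
  rw [← mul_inv, ← Complex.ofReal_mul, Real.mul_self_sqrt (by norm_num)]
  norm_num

lemma bell_eq (i : Fin 4) : bell i = (Real.sqrt 2 : ℂ)⁻¹ • ubell i := by
  fin_cases i <;> rfl

lemma bellProj_eq (i : Fin 4) : bellProj i = (2:ℂ)⁻¹ • ketBra (ubell i) (ubell i) := by
  funext p q
  simp only [bellProj, bell_eq, ketBra, Pi.smul_apply, smul_eq_mul, star_mul',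
    star_sqrt2_inv, Matrix.smul_apply]
  rw [show ((Real.sqrt 2:ℂ))⁻¹ * ubell i p * (((Real.sqrt 2:ℂ))⁻¹ * star (ubell i q))
      = (((Real.sqrt 2:ℂ))⁻¹ * ((Real.sqrt 2:ℂ))⁻¹) * (ubell i p * star (ubell i q)) by ring,
    sqrt2_inv_sq]

lemma trace_ketBra_ketBra (w z : Vec4) :
    (ketBra w w * ketBra z z).trace = (star w ⬝ᵥ z) * (star z ⬝ᵥ w) := by
  rw [trace_ketBra_mul, ketBra_mulVec, dotProduct_smul, smul_eq_mul, mul_comm]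

lemma ubell_dot (i j : Fin 4) :
    star (ubell i) ⬝ᵥ ubell j = if i = j then 2 else 0 := by
  fin_cases i <;> fin_cases j <;>
    simp [ubell, ket, dotProduct, Fintype.sum_prod_type, Fin.sum_univ_succ] <;>
    norm_num

lemma bell_dot (i j : Fin 4) :
    star (bell i) ⬝ᵥ bell j = if i = j then 1 else 0 := by
  rw [bell_eq, bell_eq]
  rw [show star ((Real.sqrt 2:ℂ)⁻¹ • ubell i) = (Real.sqrt 2:ℂ)⁻¹ • star (ubell i) by
    funext p; simp [star_mul', star_sqrt2_inv, mul_comm]]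
  rw [smul_dotProduct, dotProduct_smul, smul_eq_mul, smul_eq_mul, ← mul_assoc,
    sqrt2_inv_sq, ubell_dot]
  split <;> norm_num

lemma trace_bellProj_mul_bellProj (i j : Fin 4) :
    (bellProj i * bellProj j).trace = if i = j then 1 else 0 := by
  rw [bellProj, bellProj, trace_ketBra_ketBra, bell_dot, bell_dot]
  split <;> simp_all

lemma sum_bellProj : ∑ i : Fin 4, bellProj i = (1 : Mat4) := by
  funext p q
  fin_cases p <;> fin_cases q <;>
    simp [Fin.sum_univ_succ, bellProj_eq, ketBra, ubell, ket, Matrix.sum_apply,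
      Matrix.one_apply, Prod.ext_iff] <;> norm_num

lemma trace_ketBra_conj (w v : Vec4) (A : Mat4) :
    (ketBra w w * (A * ketBra v v * Aᴴ)).trace
      = ((Complex.normSq (star v ⬝ᵥ (Aᴴ *ᵥ w)) : ℝ) : ℂ) := by
  rw [trace_ketBra_mul]
  rw [show (A * ketBra v v * Aᴴ) *ᵥ w = A *ᵥ (ketBra v v *ᵥ (Aᴴ *ᵥ w)) by
    rw [← Matrix.mulVec_mulVec, ← Matrix.mulVec_mulVec]]
  rw [ketBra_mulVec, Matrix.mulVec_smul, dotProduct_smul, smul_eq_mul]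
  have h1 : star w ⬝ᵥ (A *ᵥ v) = star (star v ⬝ᵥ (Aᴴ *ᵥ w)) := by
    rw [star_dot_comm v (Aᴴ *ᵥ w), star_star, Matrix.star_mulVec,
      conjTranspose_conjTranspose, ← Matrix.dotProduct_mulVec]
  rw [h1]
  simpa using Complex.mul_conj (star v ⬝ᵥ (Aᴴ *ᵥ w))

section Kraus

variable {T : Mat4 → Mat4} {k : ℕ} {K : Fin k → Mat4}

lemma T_trace (hK1 : ∑ i, (K i)ᴴ * K i = 1)
    (hKr : ∀ X, T X = ∑ i, K i * X * (K i)ᴴ) (X : Mat4) :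
    (T X).trace = X.trace := by
  rw [hKr, Matrix.trace_sum]
  have : ∀ i : Fin k, (K i * X * (K i)ᴴ).trace = ((K i)ᴴ * K i * X).trace := by
    intro i
    rw [Matrix.trace_mul_cycle]
  simp_rw [this, ← Matrix.trace_sum, ← Finset.sum_mul, hK1, one_mul]

lemma T_add (hKr : ∀ X, T X = ∑ i, K i * X * (K i)ᴴ) (X Y : Mat4) :
    T (X + Y) = T X + T Y := by
  simp [hKr, Matrix.mul_add, Matrix.add_mul, Finset.sum_add_distrib]

lemma T_smul (hKr : ∀ X, T X = ∑ i, K i * X * (K i)ᴴ) (c : ℂ) (X : Mat4) :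
    T (c • X) = c • T X := by
  simp [hKr, Matrix.mul_smul, Matrix.smul_mul, Finset.smul_sum]

lemma T_trace_form (hKr : ∀ X, T X = ∑ i, K i * X * (K i)ᴴ) (w v : Vec4) :
    (ketBra w w * T (ketBra v v)).trace
      = ((∑ i, Complex.normSq (star v ⬝ᵥ ((K i)ᴴ *ᵥ w)) : ℝ) : ℂ) := by
  rw [hKr, Matrix.mul_sum, Matrix.trace_sum]
  simp_rw [trace_ketBra_conj]
  push_cast
  rfl

end Kraus

/-- The Kronecker product of unit vectors, as a Vec4. -/
def kron2 (u v : Fin 2 → ℂ) : Vec4 := fun p => u p.1 * v p.2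

lemma kron_eq_ketBra (u v : Fin 2 → ℂ) :
    vecMulVec u (star u) ⊗ₖ vecMulVec v (star v) = ketBra (kron2 u v) (kron2 u v) := by
  funext p q
  simp only [Matrix.kroneckerMap_apply, vecMulVec_apply, ketBra, kron2, Pi.star_apply,
    star_mul']
  ring

lemma key_ineq (a b c d : ℂ)
    (h : (Complex.normSq a + Complex.normSq b) * (Complex.normSq c + Complex.normSq d) ≤ 1) :
    Complex.normSq (a * c + b * d) ≤ 1 := by
  have h1 : ‖a * c + b * d‖ ≤ ‖a‖ * ‖c‖
      + ‖b‖ * ‖d‖ := by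
    calc ‖a * c + b * d‖ ≤ ‖a*c‖ + ‖b*d‖ :=
          norm_add_le _ _
      _ = _ := by rw [norm_mul, norm_mul]
  have h2 : ∀ z : ℂ, Complex.normSq z = ‖z‖ ^ 2 := fun z => (Complex.sq_norm z).symm
  rw [h2]
  rw [h2 a, h2 b, h2 c, h2 d] at h
  have hn : ∀ z : ℂ, 0 ≤ ‖z‖ := fun z => norm_nonneg _
  nlinarith [sq_nonneg (‖a‖ * ‖d‖ - ‖b‖ * ‖c‖),
    hn a, hn b, hn c, hn d, hn (a*c+b*d), sq_nonneg (‖a‖ * ‖c‖ + ‖b‖ * ‖d‖)]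

lemma normSq_sqrt2_inv : Complex.normSq ((Real.sqrt 2 : ℂ))⁻¹ = 2⁻¹ := by
  rw [map_inv₀, Complex.normSq_ofReal, Real.mul_self_sqrt (by norm_num)]

lemma bell_kron_bound (i : Fin 4) (u v : Fin 2 → ℂ)
    (hu : IsUnitVec u) (hv : IsUnitVec v) :
    Complex.normSq (star (bell i) ⬝ᵥ kron2 u v) ≤ 1/2 := by
  have hs : star (bell i) = (Real.sqrt 2 : ℂ)⁻¹ • star (ubell i) := by
    rw [bell_eq]; funext p; simp [star_mul', star_sqrt2_inv, mul_comm]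
  rw [hs, smul_dotProduct, smul_eq_mul, Complex.normSq_mul, normSq_sqrt2_inv]
  have huv : (Complex.normSq (u 0) + Complex.normSq (u 1))
      * (Complex.normSq (v 0) + Complex.normSq (v 1)) ≤ 1 := by
    have h1 := hu; have h2 := hv
    simp only [IsUnitVec, Fin.sum_univ_two] at h1 h2
    rw [h1, h2]; norm_num
  have hb : Complex.normSq (star (ubell i) ⬝ᵥ kron2 u v) ≤ 1 := by
    fin_cases i <;>
      · simp only [ubell, dotProduct, Fintype.sum_prod_type, Fin.sum_univ_two,
          Matrix.cons_val_zero, Matrix.cons_val_one, Matrix.head_cons, kron2,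
          Pi.star_apply, Pi.add_apply, Pi.sub_apply, ket, Matrix.cons_val_fin_one,
          Matrix.cons_val_succ]
        norm_num [ket, Prod.ext_iff, Fin.ext_iff]
        first
        | exact key_ineq (u 0) (u 1) (v 0) (v 1) huv
        | · have := key_ineq (u 0) (u 1) (v 0) (-(v 1)) (by simpa using huv)
            simpa [mul_neg] using this
        | · have := key_ineq (u 0) (u 1) (v 1) (v 0)
              (by rw [add_comm (Complex.normSq (v 1))]; exact huv)
            simpa using this
        | · have := key_ineq (u 0) (u 1) (-(v 1)) (v 0)
              (by rw [Complex.normSq_neg, add_comm (Complex.normSq (v 1))]; exact huv)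
            simpa [mul_neg] using this
  linarith [mul_le_mul_of_nonneg_left hb (by norm_num : (0:ℝ) ≤ 2⁻¹)]

lemma sep_trace_bound (i : Fin 4) {σ : Mat4} (h : SepState σ) :
    ∃ r : ℝ, (bellProj i * σ).trace = (r : ℂ) ∧ 0 ≤ r ∧ r ≤ 1/2 := by
  obtain ⟨n, p, u, v, hp, hps, hu, hv, rfl⟩ := h
  have key : ∀ j, (bellProj i *
      ((p j : ℂ) • (vecMulVec (u j) (star (u j)) ⊗ₖ vecMulVec (v j) (star (v j))))).trace
      = ((p j * Complex.normSq (star (bell i) ⬝ᵥ kron2 (u j) (v j)) : ℝ) : ℂ) := by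
    intro j
    rw [kron_eq_ketBra, Matrix.mul_smul, Matrix.trace_smul, bellProj, trace_ketBra_ketBra,
      star_dot_comm (kron2 (u j) (v j)) (bell i)]
    rw [show star (bell i) ⬝ᵥ kron2 (u j) (v j) * star (star (bell i) ⬝ᵥ kron2 (u j) (v j))
        = ((Complex.normSq (star (bell i) ⬝ᵥ kron2 (u j) (v j)) : ℝ) : ℂ) by
      simpa using Complex.mul_conj (star (bell i) ⬝ᵥ kron2 (u j) (v j))]
    rw [Complex.ofReal_mul, smul_eq_mul]
  rw [Matrix.mul_sum, Matrix.trace_sum]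
  simp_rw [key]
  refine ⟨∑ j, p j * Complex.normSq (star (bell i) ⬝ᵥ kron2 (u j) (v j)), by push_cast; rfl,
    Finset.sum_nonneg fun j _ => mul_nonneg (hp j) (Complex.normSq_nonneg _), ?_⟩
  calc ∑ j, p j * Complex.normSq (star (bell i) ⬝ᵥ kron2 (u j) (v j))
      ≤ ∑ j, p j * (1/2) := Finset.sum_le_sum fun j _ =>
        mul_le_mul_of_nonneg_left (bell_kron_bound i (u j) (v j) (hu j) (hv j)) (hp j)
    _ = 1/2 := by rw [← Finset.sum_mul, hps, one_mul]

/-- Unnormalized product-phase vector (1, z̄, z, 1). -/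
def gv (z : ℂ) : Vec4 := ket 0 0 + star z • ket 0 1 + z • ket 1 0 + ket 1 1

lemma ketBra_smul_self (c : ℂ) (ψ : Vec4) :
    ketBra (c • ψ) (c • ψ) = (c * star c) • ketBra ψ ψ := by
  funext p q
  simp only [ketBra, Pi.smul_apply, smul_eq_mul, star_mul', Matrix.smul_apply]
  ring

lemma gsum :
    ketBra (gv 1) (gv 1) + ketBra (gv Complex.I) (gv Complex.I)
      + ketBra (gv (-1)) (gv (-1)) + ketBra (gv (-Complex.I)) (gv (-Complex.I))
    = (4:ℂ) • (ketBra (ubell 0) (ubell 0) + ketBra (ket 0 1) (ket 0 1)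
        + ketBra (ket 1 0) (ket 1 0)) := by
  funext p q
  fin_cases p <;> fin_cases q <;>
    simp [gv, ketBra, ket, ubell, Prod.ext_iff, Fin.ext_iff, Complex.ext_iff] <;>
    norm_num

lemma ubell_ketBra_sum :
    ketBra (ubell 0) (ubell 0) + ketBra (ubell 1) (ubell 1)
      = (2:ℂ) • (ketBra (ket 0 0) (ket 0 0) + ketBra (ket 1 1) (ket 1 1)) := by
  funext p q
  fin_cases p <;> fin_cases q <;>
    simp [ketBra, ket, ubell, Prod.ext_iff, Fin.ext_iff] <;>
    norm_num

lemma tau_decomp (b c : ℂ) (h : (4:ℂ) * b + 2 * c = 1) :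
    (2⁻¹ : ℂ) • bellProj 0 + b • ketBra (ket 0 1) (ket 0 1)
      + c • bellProj 1 + b • ketBra (ket 1 0) (ket 1 0)
    = b • ((4⁻¹:ℂ) • ketBra (gv 1) (gv 1))
      + b • ((4⁻¹:ℂ) • ketBra (gv Complex.I) (gv Complex.I))
      + b • ((4⁻¹:ℂ) • ketBra (gv (-1)) (gv (-1)))
      + b • ((4⁻¹:ℂ) • ketBra (gv (-Complex.I)) (gv (-Complex.I)))
      + c • ketBra (ket 0 0) (ket 0 0) + c • ketBra (ket 1 1) (ket 1 1) := by
  funext p q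
  fin_cases p <;> fin_cases q <;>
    simp [bellProj_eq, ketBra, gv, ket, ubell, Prod.ext_iff, Fin.ext_iff,
      Complex.conj_I] <;>
    first
      | ring1
      | linear_combination h / 4
      | linear_combination -h / 4


def sC : ℂ := (Real.sqrt 2 : ℂ)⁻¹

lemma kron2_gv (z w : ℂ) (hz : z * w = 1) (hw : w = star z) :
    kron2 ![sC, sC * z] ![sC, sC * w] = (2⁻¹ : ℂ) • gv z := by
  subst hw
  have hz' : z * (starRingEnd ℂ) z = 1 := hz
  funext p
  fin_cases p <;>
    simp [kron2, gv, ket, sC, Prod.ext_iff, Fin.ext_iff, Complex.star_def] <;>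
    first
      | linear_combination sqrt2_inv_sq
      | linear_combination (starRingEnd ℂ) z * sqrt2_inv_sq
      | linear_combination z * sqrt2_inv_sq
      | linear_combination z * (starRingEnd ℂ) z * sqrt2_inv_sq + (2⁻¹ : ℂ) * hz'

lemma star_sC : star sC = sC := star_sqrt2_inv

lemma prod_term (z w : ℂ) (hz : z * w = 1) (hw : w = star z) :
    vecMulVec ![sC, sC * z] (star ![sC, sC * z])
      ⊗ₖ vecMulVec ![sC, sC * w] (star ![sC, sC * w])
    = (4⁻¹ : ℂ) • ketBra (gv z) (gv z) := by
  rw [kron_eq_ketBra, kron2_gv z w hz hw, ketBra_smul_self]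
  norm_num

lemma kron2_e00 : kron2 ![1, 0] ![1, 0] = ket 0 0 := by
  funext p
  fin_cases p <;> simp [kron2, ket, Prod.ext_iff, Fin.ext_iff]

lemma kron2_e11 : kron2 ![0, 1] ![0, 1] = ket 1 1 := by
  funext p
  fin_cases p <;> simp [kron2, ket, Prod.ext_iff, Fin.ext_iff]

lemma unit_sC (z : ℂ) (hz : Complex.normSq z = 1) : IsUnitVec ![sC, sC * z] := by
  simp [IsUnitVec, Fin.sum_univ_two, Complex.normSq_mul, hz, sC, normSq_sqrt2_inv]
  norm_num

lemma unit_e0 : IsUnitVec ![(1:ℂ), 0] := by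
  simp [IsUnitVec, Fin.sum_univ_two]

lemma unit_e1 : IsUnitVec ![(0:ℂ), 1] := by
  simp [IsUnitVec, Fin.sum_univ_two]

lemma sep_E01 : SepState (ketBra (ket 0 1) (ket 0 1)) := by
  refine ⟨1, fun _ => 1, fun _ => ![1, 0], fun _ => ![0, 1], fun _ => zero_le_one,
    by simp, fun _ => unit_e0, fun _ => unit_e1, ?_⟩
  rw [Fin.sum_univ_one, kron_eq_ketBra]
  rw [show kron2 ![(1:ℂ),0] ![(0:ℂ),1] = ket 0 1 by
    funext p; fin_cases p <;> simp [kron2, ket, Prod.ext_iff, Fin.ext_iff]]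
  norm_num

lemma sep_tau (b c : ℝ) (hb : 0 ≤ b) (hc : 0 ≤ c) (h : 4*b + 2*c = 1) :
    SepState ((2⁻¹ : ℂ) • bellProj 0 + (b:ℂ) • ketBra (ket 0 1) (ket 0 1)
      + (c:ℂ) • bellProj 1 + (b:ℂ) • ketBra (ket 1 0) (ket 1 0)) := by
  have hC : (4:ℂ) * (b:ℂ) + 2 * (c:ℂ) = 1 := by exact_mod_cast congrArg (Complex.ofReal) h
  refine ⟨6, ![b,b,b,b,c,c],
    ![![sC, sC * 1], ![sC, sC * Complex.I], ![sC, sC * (-1)], ![sC, sC * (-Complex.I)],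
      ![1,0], ![0,1]],
    ![![sC, sC * 1], ![sC, sC * (-Complex.I)], ![sC, sC * (-1)], ![sC, sC * Complex.I],
      ![1,0], ![0,1]], ?_, ?_, ?_, ?_, ?_⟩
  · intro i; fin_cases i <;> simpa
  · simp [Fin.sum_univ_succ]; linarith
  · intro i; fin_cases i <;>
      first
        | exact unit_e0
        | exact unit_e1
        | exact unit_sC _ (by simp)
  · intro i; fin_cases i <;>
      first
        | exact unit_e0
        | exact unit_e1
        | exact unit_sC _ (by simp)
  · simp only [Fin.sum_univ_succ, Fin.sum_univ_zero, add_zero,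
      Matrix.cons_val_zero, Matrix.cons_val_one, Matrix.head_cons,
      Matrix.cons_val_succ]
    rw [prod_term 1 1 (by norm_num) (by simp),
        prod_term Complex.I (-Complex.I) (by simp [Complex.I_mul_I]) (by simp [Complex.conj_I]),
        prod_term (-1) (-1) (by norm_num) (by simp),
        prod_term (-Complex.I) Complex.I (by simp [Complex.I_mul_I]) (by simp [Complex.conj_I]),
        kron_eq_ketBra, kron2_e00, kron_eq_ketBra, kron2_e11]
    rw [tau_decomp (b:ℂ) (c:ℂ) hC]
    module

lemma trace_ketBra_self (w : Vec4) : (ketBra w w).trace = star w ⬝ᵥ w := by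
  simp only [Matrix.trace, Matrix.diag, ketBra, dotProduct, Pi.star_apply]
  apply Finset.sum_congr rfl
  intro p _
  ring

lemma expand4 (M : Mat4) (a b' c' d' : ℂ) (W X Y Z : Mat4) :
    (M * (a • W + b' • X + c' • Y + d' • Z)).trace
      = a * (M * W).trace + b' * (M * X).trace + c' * (M * Y).trace + d' * (M * Z).trace := by
  simp only [Matrix.mul_add, Matrix.mul_smul, Matrix.trace_add, Matrix.trace_smul,
    smul_eq_mul]

lemma expand3 (M : Mat4) (a b' c' : ℂ) (W X Y : Mat4) :
    (M * (a • W + b' • X + c' • Y)).trace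
      = a * (M * W).trace + b' * (M * X).trace + c' * (M * Y).trace := by
  simp only [Matrix.mul_add, Matrix.mul_smul, Matrix.trace_add, Matrix.trace_smul,
    smul_eq_mul]

theorem NE_rank3_forced_values (l1 l2 l3 : ℝ)
    (h12 : l2 ≤ l1) (h23 : l3 ≤ l2) (h3 : 0 < l3)
    (hsum : l1 + l2 + l3 = 1) (ha : 2 * l1 - l2 > 1)
    (T : Mat4 → Mat4) (hT : IsNE T)
    (hmap : T (mems l1 l2 l3 0) = bdiag l1 l2 l3 0) :
    (bellProj 0 * T (bellProj 0)).trace = 1 ∧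
    (bellProj 0 * T (ketBra (ket 0 1) (ket 0 1))).trace = 0 ∧
    (bellProj 0 * T (bellProj 1)).trace = 0 ∧
    (bellProj 1 * T (ketBra (ket 0 1) (ket 0 1))).trace = 1 / 2 ∧
    (bellProj 2 * T (ketBra (ket 0 1) (ket 0 1))).trace = 1 / 2 ∧
    (bellProj 1 * T (bellProj 1)).trace = ((l2 / (2 * l3) : ℝ) : ℂ) := by
  obtain ⟨⟨k, K, hK1, hKr⟩, hNE⟩ := hT
  have hl2 : 0 < l2 := lt_of_lt_of_le h3 h23
  have hl1 : 0 < l1 := lt_of_lt_of_le hl2 h12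
  have hmargin : 2*l2 + l3 < l1 := by linarith
  -- the real quantities x i v = tr(Φ_i T(|v⟩⟨v|))
  obtain ⟨x, hform, hxnn⟩ : ∃ x : Fin 4 → Vec4 → ℝ,
      (∀ (i : Fin 4) (v : Vec4), (bellProj i * T (ketBra v v)).trace = ((x i v : ℝ) : ℂ))
      ∧ (∀ (i : Fin 4) (v : Vec4), 0 ≤ x i v) :=
    ⟨fun i v => ∑ j, Complex.normSq (star v ⬝ᵥ ((K j)ᴴ *ᵥ bell i)),
     fun i v => by rw [bellProj]; exact T_trace_form hKr (bell i) v,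
     fun i v => Finset.sum_nonneg fun j _ => Complex.normSq_nonneg _⟩
  have hP0 : bellProj 0 = ketBra (bell 0) (bell 0) := rfl
  have hP1 : bellProj 1 = ketBra (bell 1) (bell 1) := rfl
  -- column sums
  have hcol : ∀ v : Vec4, (∑ i : Fin 4, (bellProj i * T (ketBra v v)).trace)
      = (ketBra v v).trace := by
    intro v
    rw [← Matrix.trace_sum, ← Finset.sum_mul, sum_bellProj, one_mul]
    exact T_trace hK1 hKr _
  have htr_b0 : (ketBra (bell 0) (bell 0)).trace = 1 := by
    rw [trace_ketBra_self, bell_dot 0 0]; norm_num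
  have htr_b1 : (ketBra (bell 1) (bell 1)).trace = 1 := by
    rw [trace_ketBra_self, bell_dot 1 1]; norm_num
  have htr_e01 : (ketBra (ket 0 1) (ket 0 1)).trace = 1 := by
    rw [trace_ketBra_self]
    simp [ket, dotProduct, Fintype.sum_prod_type, Fin.sum_univ_two, Prod.ext_iff]
  have hcolR : ∀ v : Vec4, (ketBra v v).trace = 1 →
      x 0 v + x 1 v + x 2 v + x 3 v = 1 := by
    intro v hv
    have h := hcol v
    rw [hv, Fin.sum_univ_four, hform, hform, hform, hform] at h
    exact_mod_cast h
  have hcol0 := hcolR (bell 0) htr_b0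
  have hcol1 := hcolR (ket 0 1) htr_e01
  have hcol2 := hcolR (bell 1) htr_b1
  -- row equations from hmap
  have hmemsT : bdiag l1 l2 l3 0
      = (l1:ℂ) • T (ketBra (bell 0) (bell 0)) + (l2:ℂ) • T (ketBra (ket 0 1) (ket 0 1))
        + (l3:ℂ) • T (ketBra (bell 1) (bell 1)) := by
    rw [← hmap, mems, hP0, hP1]
    rw [show ((0:ℝ):ℂ) = 0 by norm_num, zero_smul, add_zero]
    simp only [T_add hKr, T_smul hKr]
  have hrow : ∀ i : Fin 4, (bellProj i * bdiag l1 l2 l3 0).trace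
      = (l1:ℂ) * ((x i (bell 0) : ℝ):ℂ) + (l2:ℂ) * ((x i (ket 0 1) : ℝ):ℂ)
        + (l3:ℂ) * ((x i (bell 1) : ℝ):ℂ) := by
    intro i
    rw [show bellProj i * bdiag l1 l2 l3 0
        = bellProj i * ((l1:ℂ) • T (ketBra (bell 0) (bell 0))
          + (l2:ℂ) • T (ketBra (ket 0 1) (ket 0 1))
          + (l3:ℂ) • T (ketBra (bell 1) (bell 1))) by rw [← hmemsT]]
    rw [expand3, hform, hform, hform]
  have hbd : ∀ i : Fin 4, (bellProj i * bdiag l1 l2 l3 0).trace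
      = ((![l1, l2, l3, 0] i : ℝ) : ℂ) := by
    intro i
    rw [bdiag]
    rw [expand4]
    rw [trace_bellProj_mul_bellProj, trace_bellProj_mul_bellProj,
      trace_bellProj_mul_bellProj, trace_bellProj_mul_bellProj]
    fin_cases i <;> norm_num [Fin.ext_iff]
  have hrowR : ∀ i : Fin 4, l1 * x i (bell 0) + l2 * x i (ket 0 1) + l3 * x i (bell 1)
      = ![l1, l2, l3, 0] i := by
    intro i
    have h := (hrow i).symm.trans (hbd i)
    exact_mod_cast h
  have hrow0 := hrowR 0
  have hrow1 := hrowR 1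
  have hrow3 := hrowR 3
  rw [show (![l1,l2,l3,0] : Fin 4 → ℝ) 0 = l1 by norm_num] at hrow0
  rw [show (![l1,l2,l3,0] : Fin 4 → ℝ) 1 = l2 by norm_num] at hrow1
  rw [show (![l1,l2,l3,0] : Fin 4 → ℝ) 3 = 0 by rfl] at hrow3
  -- singlet-fraction bounds on T(E01)
  have hsepE01 := hNE _ sep_E01
  have hbound : ∀ i : Fin 4, x i (ket 0 1) ≤ 1/2 := by
    intro i
    obtain ⟨r, hr, hr0, hr2⟩ := sep_trace_bound i hsepE01
    rw [hform] at hr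
    have : x i (ket 0 1) = r := by exact_mod_cast hr
    linarith
  -- the separable state τ and its constraint
  set cR : ℝ := (l1 - 2*l2 + l3)/(4*l1) with hcRdef
  set bR : ℝ := (l1 + 2*l2 - l3)/(8*l1) with hbRdef
  have hbR0 : 0 ≤ bR := by
    rw [hbRdef]
    apply div_nonneg _ (by positivity)
    linarith
  have hcR0 : 0 ≤ cR := by
    rw [hcRdef]
    apply div_nonneg _ (by positivity)
    linarith
  have hbc1 : 4*bR + 2*cR = 1 := by
    rw [hbRdef, hcRdef]; field_simp; ring
  have e1 : 2*l1*cR - l3 = (l1 - 2*l2 - l3)/2 := by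
    rw [hcRdef]; field_simp; ring
  have e2 : 2*l1*bR - l2 = (l1 - 2*l2 - l3)/4 := by
    rw [hbRdef]; field_simp; ring
  have hcoef1 : 0 < 2*l1*bR - l2 := by rw [e2]; linarith
  have hcoef2 : 0 < 2*l1*cR - l3 := by rw [e1]; linarith
  have hbRpos : 0 < bR := by
    rw [hbRdef]
    apply div_pos _ (by positivity)
    linarith
  have hseptau := hNE _ (sep_tau bR cR hbR0 hcR0 hbc1)
  obtain ⟨r, hr, hr0, hr2⟩ := sep_trace_bound 0 hseptau
  have hTtau : T ((2⁻¹ : ℂ) • bellProj 0 + (bR:ℂ) • ketBra (ket 0 1) (ket 0 1)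
        + (cR:ℂ) • bellProj 1 + (bR:ℂ) • ketBra (ket 1 0) (ket 1 0))
      = (2⁻¹ : ℂ) • T (ketBra (bell 0) (bell 0))
        + (bR:ℂ) • T (ketBra (ket 0 1) (ket 0 1))
        + (cR:ℂ) • T (ketBra (bell 1) (bell 1))
        + (bR:ℂ) • T (ketBra (ket 1 0) (ket 1 0)) := by
    rw [hP0, hP1]
    simp only [T_add hKr, T_smul hKr]
  rw [hTtau, expand4, hform, hform, hform, hform] at hr
  have htauR : 2⁻¹ * x 0 (bell 0) + bR * x 0 (ket 0 1) + cR * x 0 (bell 1)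
      + bR * x 0 (ket 1 0) = r := by
    rw [show ((2:ℂ))⁻¹ = ((2⁻¹:ℝ):ℂ) by norm_num] at hr
    exact_mod_cast hr
  -- now the real arithmetic
  have key : (2*l1*bR - l2) * x 0 (ket 0 1) + (2*l1*cR - l3) * x 0 (bell 1)
      + 2*l1*bR * x 0 (ket 1 0) ≤ 0 := by
    have hscale : 2*l1 * (2⁻¹ * x 0 (bell 0) + bR * x 0 (ket 0 1) + cR * x 0 (bell 1)
        + bR * x 0 (ket 1 0)) ≤ 2*l1 * (1/2) := by
      apply mul_le_mul_of_nonneg_left _ (by positivity)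
      rw [htauR]; linarith
    linarith [hscale, hrow0]
  have hA1 : x 0 (ket 0 1) = 0 := by
    by_contra hne
    have hpos : 0 < x 0 (ket 0 1) := lt_of_le_of_ne (hxnn _ _) (Ne.symm hne)
    linarith [key, mul_pos hcoef1 hpos, mul_nonneg hcoef2.le (hxnn 0 (bell 1)),
      mul_nonneg (by positivity : (0:ℝ) ≤ 2*l1*bR) (hxnn 0 (ket 1 0))]
  have hA2 : x 0 (bell 1) = 0 := by
    by_contra hne
    have hpos : 0 < x 0 (bell 1) := lt_of_le_of_ne (hxnn _ _) (Ne.symm hne)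
    linarith [key, mul_pos hcoef2 hpos, mul_nonneg hcoef1.le (hxnn 0 (ket 0 1)),
      mul_nonneg (by positivity : (0:ℝ) ≤ 2*l1*bR) (hxnn 0 (ket 1 0))]
  have hA0 : x 0 (bell 0) = 1 := by
    have h0 := hrow0
    rw [hA1, hA2] at h0
    have : l1 * x 0 (bell 0) = l1 * 1 := by rw [mul_one]; linarith
    exact mul_left_cancel₀ hl1.ne' this
  have hx10 : x 1 (bell 0) = 0 := by
    linarith [hcol0, hxnn 1 (bell 0), hxnn 2 (bell 0), hxnn 3 (bell 0)]
  have hx31 : x 3 (ket 0 1) = 0 := by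
    by_contra hne
    have hpos : 0 < x 3 (ket 0 1) := lt_of_le_of_ne (hxnn _ _) (Ne.symm hne)
    linarith [hrow3, mul_pos hl2 hpos, mul_nonneg hl1.le (hxnn 3 (bell 0)),
      mul_nonneg h3.le (hxnn 3 (bell 1))]
  have hx11 : x 1 (ket 0 1) = 1/2 := by
    have h1 := hbound 1
    have h2 := hbound 2
    linarith [hxnn 2 (ket 0 1)]
  have hx21 : x 2 (ket 0 1) = 1/2 := by
    have h1 := hbound 1
    have h2 := hbound 2
    linarith [hxnn 1 (ket 0 1)]
  have hx12 : x 1 (bell 1) = l2/(2*l3) := by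
    have hthis : l3 * x 1 (bell 1) = l2/2 := by
      rw [hx10, hx11] at hrow1; linarith
    field_simp [h3.ne'] at hthis ⊢
    linarith
  refine ⟨?_, ?_, ?_, ?_, ?_, ?_⟩
  · have h := hform 0 (bell 0)
    rw [← hP0] at h
    rw [h, hA0]
    norm_num
  · have h := hform 0 (ket 0 1)
    rw [h, hA1]
    norm_num
  · have h := hform 0 (bell 1)
    rw [← hP1] at h
    rw [h, hA2]
    norm_num
  · have h := hform 1 (ket 0 1)
    rw [h, hx11]
    norm_num
  · have h := hform 2 (ket 0 1)
    rw [h, hx21]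
    norm_num
  · have h := hform 1 (bell 1)
    rw [← hP1] at h
    rw [h, hx12]
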